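/- arXiv:0902.4352 — 2 statements merged into one kernel-verified Lean document; each statement's English description precedes it below -/
import Mathlib

section
/- For real constants $a, b, c$, the function $\phi(y,v) = (|y|+1)^{-a}(|v|+1)^{-b}(|y+v|+1)^{-c}$ is integrable over $\mathbb{R}^2$ if and only if $a+b>1$, $a+c>1$, $b+c>1$ and $a+b+c>2$. -/
/-! Write `⟨x⟩ = |x| + 1`. The maps `(y, v) ↦ (v, y)` and `(y, v) ↦ (-(y + v), v)` preserve
Lebesgue measure and permute the exponents `a, b, c`, so it suffices to treat one of the three
pairwise conditions.

Where `|y|` is the smallest of `|y|, |v|, |y + v|`, the brackets `⟨v⟩` and `⟨y + v⟩` agree up to a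
factor `2`, so `φ ≲ ⟨y⟩^(-a) ⟨v⟩^(-(b + c))`; since `⟨y⟩ ≤ ⟨v⟩`, part of the exponent of `⟨v⟩`
may be moved onto `⟨y⟩`, giving an integrable product `⟨y⟩^(-p) ⟨v⟩^(-q)` with `p, q > 1` once
`b + c > 1` and `a + b + c > 2`. Conversely, a slice `v ↦ φ(y, v)` decays only like
`v^(-(b + c))`, and on the cone `y / 2 ≤ v ≤ y` all three brackets are comparable to `y`, so the
slice integrals are at least of order `y^(1 - (a + b + c))`. -/

open MeasureTheory Real Set

lemma rpow_le_rpow_abs_mul_rpow {A B K : ℝ} (hA : 0 < A) (hB : 0 < B) (hAB : A ≤ K * B)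
    (hBA : B ≤ K * A) (e : ℝ) : A ^ e ≤ K ^ |e| * B ^ e := by
  have hK : 0 < K := pos_of_mul_pos_left (hA.trans_le hAB) hB.le
  rcases le_total 0 e with he | he
  · rw [abs_of_nonneg he, ← mul_rpow hK.le hB.le]
    exact rpow_le_rpow hA.le hAB he
  · rw [abs_of_nonpos he]
    calc A ^ e ≤ (B / K) ^ e :=
          rpow_le_rpow_of_nonpos (div_pos hB hK) ((div_le_iff₀' hK).2 hBA) he
      _ = K ^ (-e) * B ^ e := by rw [div_rpow hB.le hK.le, rpow_neg hK.le, div_eq_inv_mul]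

lemma rpow_neg_abs_mul_rpow_le {A B K : ℝ} (hA : 0 < A) (hB : 0 < B) (hAB : A ≤ K * B)
    (hBA : B ≤ K * A) (e : ℝ) : K ^ (-|e|) * B ^ e ≤ A ^ e := by
  have hK : 0 < K := pos_of_mul_pos_left (hA.trans_le hAB) hB.le
  rw [rpow_neg hK.le, inv_mul_le_iff₀ (by positivity)]
  exact rpow_le_rpow_abs_mul_rpow hB hA hBA hAB e

lemma rpow_mul_rpow_le_rpow_sub_mul_rpow_add {A B : ℝ} (hA : 0 < A) (hAB : A ≤ B) (e f : ℝ)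
    {t : ℝ} (ht : 0 ≤ t) : A ^ e * B ^ f ≤ A ^ (e - t) * B ^ (f + t) := by
  have hB : 0 < B := hA.trans_le hAB
  calc A ^ e * B ^ f = A ^ (e - t) * A ^ t * B ^ f := by rw [← rpow_add hA, sub_add_cancel]
    _ ≤ A ^ (e - t) * B ^ t * B ^ f := by gcongr
    _ = A ^ (e - t) * B ^ (f + t) := by rw [rpow_add hB]; ring

lemma one_lt_of_mul_rpow_neg_le {f : ℝ → ℝ} {M C r : ℝ} (hM : 0 < M) (hC : 0 < C)
    (hf : IntegrableOn f (Ioi M)) (hle : ∀ᵐ x, M < x → C * x ^ (-r) ≤ f x) : 1 < r := by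
  have hmaj : IntegrableOn (fun x => C * x ^ (-r)) (Ioi M) := by
    refine hf.mono' (by fun_prop) ?_
    rw [ae_restrict_iff' measurableSet_Ioi]
    filter_upwards [hle] with x hx hMx
    have : 0 < x := hM.trans hMx
    rw [norm_of_nonneg (by positivity)]
    exact hx hMx
  rw [IntegrableOn, integrable_const_mul_iff (isUnit_iff_ne_zero.2 hC.ne'),
    ← IntegrableOn, integrableOn_Ioi_rpow_iff hM] at hmaj
  linarith

lemma integrable_abs_add_one_rpow_neg {r : ℝ} (hr : 1 < r) :
    Integrable fun x : ℝ => (|x| + 1) ^ (-r) := by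
  have h : (Module.finrank ℝ ℝ : ℝ) < r := by rwa [Module.finrank_self, Nat.cast_one]
  simpa [norm_eq_abs, add_comm] using integrable_one_add_norm (μ := volume) h

namespace TripleBracket

noncomputable def phi (a b c : ℝ) (z : ℝ × ℝ) : ℝ :=
  (|z.1| + 1) ^ (-a) * (|z.2| + 1) ^ (-b) * (|z.1 + z.2| + 1) ^ (-c)

def shear (z : ℝ × ℝ) : ℝ × ℝ := (-(z.1 + z.2), z.2)

variable {a b c : ℝ}

lemma phi_nonneg (a b c : ℝ) (z : ℝ × ℝ) : 0 ≤ phi a b c z := by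
  unfold phi; positivity

lemma measurable_phi (a b c : ℝ) : Measurable (phi a b c) := by
  unfold phi; fun_prop

lemma phi_comp_swap (a b c : ℝ) : phi a b c ∘ Prod.swap = phi b a c := by
  ext z
  simp only [phi, Function.comp_apply, Prod.fst_swap, Prod.snd_swap, add_comm z.2 z.1]
  ring

lemma phi_comp_shear (a b c : ℝ) : phi a b c ∘ shear = phi c b a := by
  ext z
  have hsum : -(z.1 + z.2) + z.2 = -z.1 := by ring
  simp only [phi, shear, Function.comp_apply, hsum, abs_neg]
  ring

lemma measurePreserving_shear : MeasurePreserving shear := by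
  rw [Measure.volume_eq_prod]
  exact ((Measure.measurePreserving_neg volume).prod (MeasurePreserving.id volume)).comp
    (measurePreserving_add_prod volume volume)

lemma integrable_phi_swap (h : Integrable (phi a b c)) : Integrable (phi b a c) := by
  rw [Measure.volume_eq_prod] at h ⊢
  rw [← phi_comp_swap]
  exact Measure.measurePreserving_swap.integrable_comp_of_integrable h

lemma integrable_phi_shear (h : Integrable (phi a b c)) : Integrable (phi c b a) := by
  rw [← phi_comp_shear]
  exact measurePreserving_shear.integrable_comp_of_integrable h

/- Splitting the total exponent `a + b + c` as `max a ((a + b + c) / 2)` plus the rest makes both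
exponents exceed `1` under the hypotheses of `integrable_majorant`. -/
noncomputable def majorant (a b c : ℝ) (z : ℝ × ℝ) : ℝ :=
  2 ^ |c| * ((|z.1| + 1) ^ (-max a ((a + b + c) / 2)) *
    (|z.2| + 1) ^ (-(a + b + c - max a ((a + b + c) / 2))))

lemma majorant_nonneg (a b c : ℝ) (z : ℝ × ℝ) : 0 ≤ majorant a b c z := by
  unfold majorant; positivity

lemma integrable_majorant (hbc : 1 < b + c) (habc : 2 < a + b + c) :
    Integrable (majorant a b c) := by
  have hp : 1 < max a ((a + b + c) / 2) := lt_max_of_lt_right (by linarith)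
  have hq : 1 < a + b + c - max a ((a + b + c) / 2) := by
    have := max_lt (show a < a + b + c - 1 by linarith)
      (show (a + b + c) / 2 < a + b + c - 1 by linarith)
    linarith
  rw [Measure.volume_eq_prod]
  exact ((integrable_abs_add_one_rpow_neg hp).mul_prod
    (integrable_abs_add_one_rpow_neg hq)).const_mul _

lemma phi_le_majorant {y v : ℝ} (hv : |y| ≤ |v|) (hyv : |y| ≤ |y + v|) :
    phi a b c (y, v) ≤ majorant a b c (y, v) := by
  set p := max a ((a + b + c) / 2)
  have hcomp : (|y + v| + 1) ^ (-c) ≤ 2 ^ |c| * (|v| + 1) ^ (-c) := by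
    simpa only [abs_neg] using rpow_le_rpow_abs_mul_rpow (by positivity) (by positivity)
      (by linarith [abs_add_le y v])
      (by linarith [show |v| ≤ |y + v| + |y| by simpa using abs_add_le (y + v) (-y)]) (-c)
  have hshift := rpow_mul_rpow_le_rpow_sub_mul_rpow_add (by positivity)
    (add_le_add_left hv 1 : |y| + 1 ≤ |v| + 1) (-a) (-(b + c))
    (sub_nonneg.2 (le_max_left a _) : 0 ≤ p - a)
  calc phi a b c (y, v)
      ≤ (|y| + 1) ^ (-a) * (|v| + 1) ^ (-b) * (2 ^ |c| * (|v| + 1) ^ (-c)) := by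
        unfold phi; gcongr
    _ = 2 ^ |c| * ((|y| + 1) ^ (-a) * (|v| + 1) ^ (-(b + c))) := by
        rw [neg_add, rpow_add (by positivity)]; ring
    _ ≤ 2 ^ |c| * ((|y| + 1) ^ (-a - (p - a)) * (|v| + 1) ^ (-(b + c) + (p - a))) := by gcongr
    _ = majorant a b c (y, v) := by
        rw [show -a - (p - a) = -p by ring, show -(b + c) + (p - a) = -(a + b + c - p) by ring]
        rfl

lemma phi_le_majorant_add (z : ℝ × ℝ) :
    phi a b c z ≤ majorant a b c z + majorant b a c z.swap + majorant c b a (shear z) := by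
  obtain ⟨y, v⟩ := z
  have h₁ := majorant_nonneg a b c (y, v)
  have h₂ := majorant_nonneg b a c (v, y)
  have h₃ := majorant_nonneg c b a (shear (y, v))
  have hv : |v| ≤ |y| → |v| ≤ |y + v| → phi a b c (y, v) ≤ majorant b a c (v, y) := by
    intro h h'
    rw [← congrFun (phi_comp_swap b a c) (y, v)]
    exact phi_le_majorant h (by rwa [add_comm])
  have hyv :
      |y + v| ≤ |v| → |y + v| ≤ |y| → phi a b c (y, v) ≤ majorant c b a (shear (y, v)) := by
    intro h h'
    rw [← congrFun (phi_comp_shear c b a) (y, v)]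
    exact phi_le_majorant (y := -(y + v)) (by rwa [abs_neg])
      (by rwa [abs_neg, show -(y + v) + v = -y by ring, abs_neg])
  show phi a b c (y, v) ≤
    majorant a b c (y, v) + majorant b a c (v, y) + majorant c b a (shear (y, v))
  rcases le_total |y| |v| with hyv' | hvy'
  · rcases le_total |y| |y + v| with h | h
    · linarith [phi_le_majorant (a := a) (b := b) (c := c) hyv' h]
    · linarith [hyv (h.trans hyv') h]
  · rcases le_total |v| |y + v| with h | h
    · linarith [hv hvy' h]
    · linarith [hyv h (h.trans hvy')]

lemma integrable_phi (hab : 1 < a + b) (hac : 1 < a + c) (hbc : 1 < b + c)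
    (habc : 2 < a + b + c) : Integrable (phi a b c) := by
  have hswap : Integrable fun z : ℝ × ℝ => majorant b a c z.swap := by
    rw [Measure.volume_eq_prod]
    exact Measure.measurePreserving_swap.integrable_comp_of_integrable
      (integrable_majorant (a := b) hac (by linarith))
  have hshear : Integrable fun z : ℝ × ℝ => majorant c b a (shear z) :=
    measurePreserving_shear.integrable_comp_of_integrable
      (integrable_majorant (a := c) (by linarith) (by linarith))
  refine (((integrable_majorant hbc habc).add hswap).add hshear).mono'
    (measurable_phi a b c).aestronglyMeasurable (ae_of_all _ fun z => ?_)
  rw [norm_of_nonneg (phi_nonneg a b c z)]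
  exact phi_le_majorant_add z

lemma le_phi_of_lt {y v : ℝ} (hv : 2 * |y| + 1 < v) :
    (|y| + 1) ^ (-a) * 4 ^ (-(|b| + |c|)) * v ^ (-(b + c)) ≤ phi a b c (y, v) := by
  have hv0 : 0 < v := by linarith [abs_nonneg y]
  have hvv : |v| = v := abs_of_pos hv0
  have hyv : v ≤ |y + v| + |y| := by simpa [hvv] using abs_add_le (y + v) (-y)
  have hb : 4 ^ (-|b|) * v ^ (-b) ≤ (|v| + 1) ^ (-b) := by
    simpa only [abs_neg] using rpow_neg_abs_mul_rpow_le (K := 4) (by positivity) hv0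
      (by rw [hvv]; linarith [abs_nonneg y]) (by linarith) (-b)
  have hc : 4 ^ (-|c|) * v ^ (-c) ≤ (|y + v| + 1) ^ (-c) := by
    simpa only [abs_neg] using rpow_neg_abs_mul_rpow_le (K := 4) (by positivity) hv0
      (by linarith [abs_add_le y v]) (by linarith) (-c)
  calc (|y| + 1) ^ (-a) * 4 ^ (-(|b| + |c|)) * v ^ (-(b + c))
      = (|y| + 1) ^ (-a) * (4 ^ (-|b|) * v ^ (-b)) * (4 ^ (-|c|) * v ^ (-c)) := by
        rw [neg_add, rpow_add four_pos, neg_add, rpow_add hv0]; ring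
    _ ≤ phi a b c (y, v) := by dsimp only [phi]; gcongr

lemma le_phi_of_mem_Icc {y v : ℝ} (hy : 1 ≤ y) (hv : v ∈ Icc (y / 2) y) :
    4 ^ (-(|a| + |b| + |c|)) * y ^ (-(a + b + c)) ≤ phi a b c (y, v) := by
  obtain ⟨hyv, hvy⟩ := hv
  have hy0 : 0 < y := by linarith
  have hv0 : 0 < v := by linarith
  have ha : 4 ^ (-|a|) * y ^ (-a) ≤ (|y| + 1) ^ (-a) := by
    simpa only [abs_neg] using rpow_neg_abs_mul_rpow_le (K := 4) (by positivity) hy0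
      (by rw [abs_of_pos hy0]; linarith) (by linarith [le_abs_self y]) (-a)
  have hb : 4 ^ (-|b|) * y ^ (-b) ≤ (|v| + 1) ^ (-b) := by
    simpa only [abs_neg] using rpow_neg_abs_mul_rpow_le (K := 4) (by positivity) hy0
      (by rw [abs_of_pos hv0]; linarith) (by rw [abs_of_pos hv0]; linarith) (-b)
  have hc : 4 ^ (-|c|) * y ^ (-c) ≤ (|y + v| + 1) ^ (-c) := by
    simpa only [abs_neg] using rpow_neg_abs_mul_rpow_le (K := 4) (by positivity) hy0
      (by rw [abs_of_pos (by linarith)]; linarith)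
      (by rw [abs_of_pos (by linarith)]; linarith) (-c)
  calc 4 ^ (-(|a| + |b| + |c|)) * y ^ (-(a + b + c))
      = 4 ^ (-|a|) * y ^ (-a) * (4 ^ (-|b|) * y ^ (-b)) * (4 ^ (-|c|) * y ^ (-c)) := by
        simp only [neg_add, rpow_add four_pos, rpow_add hy0]; ring
    _ ≤ phi a b c (y, v) := by dsimp only [phi]; gcongr

lemma one_lt_add_of_integrable_phi (h : Integrable (phi a b c)) : 1 < b + c := by
  rw [Measure.volume_eq_prod] at h
  obtain ⟨y, hy⟩ := h.prod_right_ae.exists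
  exact one_lt_of_mul_rpow_neg_le (M := 2 * |y| + 1) (by positivity) (by positivity)
    hy.integrableOn (ae_of_all _ fun v => le_phi_of_lt)

lemma two_lt_add_of_integrable_phi (h : Integrable (phi a b c)) : 2 < a + b + c := by
  rw [Measure.volume_eq_prod] at h
  set C : ℝ := 4 ^ (-(|a| + |b| + |c|))
  have key : 1 < a + b + c - 1 := by
    refine one_lt_of_mul_rpow_neg_le (f := fun y => ∫ v, ‖phi a b c (y, v)‖) (M := 1)
      (C := C / 2) one_pos (by positivity) h.integral_norm_prod_left.integrableOn ?_
    filter_upwards [h.prod_right_ae] with y hy hy1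
    have hy0 : 0 < y := by linarith
    calc C / 2 * y ^ (-(a + b + c - 1))
        = volume.real (Icc (y / 2) y) • (C * y ^ (-(a + b + c))) := by
          rw [volume_real_Icc_of_le (by linarith), smul_eq_mul, neg_sub, sub_eq_neg_add,
            rpow_add hy0, rpow_one]
          ring
      _ ≤ ∫ v in Icc (y / 2) y, ‖phi a b c (y, v)‖ :=
          setIntegral_ge_of_const_le measurableSet_Icc measure_Icc_lt_top.ne
            (fun v hv => (le_phi_of_mem_Icc hy1.le hv).trans (le_norm_self _))
            hy.norm.integrableOn
      _ ≤ ∫ v, ‖phi a b c (y, v)‖ :=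
          setIntegral_le_integral hy.norm (ae_of_all _ fun _ => norm_nonneg _)
  linarith

end TripleBracket

theorem stmt_0 (a b c : ℝ) :
    MeasureTheory.Integrable
      (fun p : ℝ × ℝ => (|p.1| + 1) ^ (-a) * (|p.2| + 1) ^ (-b) * (|p.1 + p.2| + 1) ^ (-c)) ↔
    (1 < a + b ∧ 1 < a + c ∧ 1 < b + c ∧ 2 < a + b + c) := by
  open TripleBracket in
  show Integrable (phi a b c) ↔ _
  refine ⟨fun h => ⟨?_, ?_, one_lt_add_of_integrable_phi h, two_lt_add_of_integrable_phi h⟩,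
    fun ⟨hab, hac, hbc, habc⟩ => integrable_phi hab hac hbc habc⟩
  · linarith [one_lt_add_of_integrable_phi (integrable_phi_shear h)]
  · exact one_lt_add_of_integrable_phi (integrable_phi_swap h)
end

section
/- For real constants $a, b, c$ with $a+c>1$, $b+c>1$ and $a+b+c>2$, the function $\phi(y,v) = (|y|+1)^{-a}(|v|+1)^{-b}(|y+v|+1)^{-c}$ is integrable over the quarter plane $\mathbb{R}_+^2 = (0,\infty)^2$. -/
/-! On the open quadrant, `y + v + 1` lies between `max (y + 1) (v + 1)` and `(y + 1) * (v + 1)`.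
So `(y + v + 1) ^ (-c) ≤ (y + 1) ^ (-p) * (v + 1) ^ (-q)`, with `p = q = c` if `c ≤ 0`, and for
any split `c = p + q` into nonnegative parts if `c ≥ 0`. The three inequalities on `a, b, c` let
one choose `p, q` with `a + p > 1` and `b + q > 1`, so that `φ` is dominated by the integrable
product `(y + 1) ^ (-(a + p)) * (v + 1) ^ (-(b + q))`. -/

open MeasureTheory Set Real

lemma add_add_one_rpow_neg_le_of_nonpos {c y v : ℝ} (hc : c ≤ 0) (hy : 0 ≤ y) (hv : 0 ≤ v) :
    (y + v + 1) ^ (-c) ≤ (y + 1) ^ (-c) * (v + 1) ^ (-c) := by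
  rw [← mul_rpow (by linarith) (by linarith)]
  exact rpow_le_rpow (by linarith) (by nlinarith) (by linarith)

lemma add_add_one_rpow_neg_le_of_nonneg {p q y v : ℝ} (hp : 0 ≤ p) (hq : 0 ≤ q) (hy : 0 ≤ y)
    (hv : 0 ≤ v) : (y + v + 1) ^ (-(p + q)) ≤ (y + 1) ^ (-p) * (v + 1) ^ (-q) := by
  rw [neg_add, rpow_add (by linarith)]
  exact mul_le_mul (rpow_le_rpow_of_nonpos (by linarith) (by linarith) (by linarith))
    (rpow_le_rpow_of_nonpos (by linarith) (by linarith) (by linarith)) (by positivity)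
    (by positivity)

lemma exists_nonneg_split_one_lt_add {a b c : ℝ} (hc : 0 ≤ c) (hac : 1 < a + c) (hbc : 1 < b + c)
    (habc : 2 < a + b + c) :
    ∃ p q, 0 ≤ p ∧ 0 ≤ q ∧ p + q = c ∧ 1 < a + p ∧ 1 < b + q := by
  rcases le_or_gt c (a - b) with hab | hab
  · exact ⟨0, c, le_rfl, hc, zero_add c, by linarith, hbc⟩
  rcases le_or_gt c (b - a) with hba | hba
  · exact ⟨c, 0, hc, le_rfl, add_zero c, hac, by linarith⟩
  -- the symmetric split `a + p = b + q = (a + b + c) / 2`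
  exact ⟨(c + b - a) / 2, (c + a - b) / 2, by linarith, by linarith, by ring, by linarith,
    by linarith⟩

lemma integrableOn_Ioi_add_one_rpow_neg_mul {r s : ℝ} (hr : 1 < r) (hs : 1 < s) :
    IntegrableOn (fun x : ℝ × ℝ => (x.1 + 1) ^ (-r) * (x.2 + 1) ^ (-s)) (Ioi 0 ×ˢ Ioi 0) := by
  rw [IntegrableOn, Measure.volume_eq_prod, ← Measure.prod_restrict]
  exact (integrableOn_add_rpow_Ioi_of_lt (by linarith) (by norm_num)).mul_prod
    (integrableOn_add_rpow_Ioi_of_lt (by linarith) (by norm_num))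

lemma integrableOn_of_add_add_one_rpow_neg_le {a b c p q : ℝ} (hp : 1 < a + p) (hq : 1 < b + q)
    (hle : ∀ y v : ℝ, 0 < y → 0 < v → (y + v + 1) ^ (-c) ≤ (y + 1) ^ (-p) * (v + 1) ^ (-q)) :
    IntegrableOn
      (fun x : ℝ × ℝ => (|x.1| + 1) ^ (-a) * (|x.2| + 1) ^ (-b) * (|x.1 + x.2| + 1) ^ (-c))
      (Ioi 0 ×ˢ Ioi 0) := by
  refine (integrableOn_Ioi_add_one_rpow_neg_mul hp hq).mono' (by fun_prop) ?_
  filter_upwards [self_mem_ae_restrict (measurableSet_Ioi.prod measurableSet_Ioi)]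
    with ⟨y, v⟩ ⟨hy, hv⟩
  rw [mem_Ioi] at hy hv
  have hy1 : 0 < y + 1 := by linarith
  have hv1 : 0 < v + 1 := by linarith
  rw [norm_of_nonneg (by positivity), abs_of_pos hy, abs_of_pos hv, abs_of_pos (add_pos hy hv)]
  calc (y + 1) ^ (-a) * (v + 1) ^ (-b) * (y + v + 1) ^ (-c)
      ≤ (y + 1) ^ (-a) * (v + 1) ^ (-b) * ((y + 1) ^ (-p) * (v + 1) ^ (-q)) := by
        gcongr; exact hle y v hy hv
    _ = (y + 1) ^ (-(a + p)) * (v + 1) ^ (-(b + q)) := by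
        rw [neg_add, neg_add, rpow_add hy1, rpow_add hv1]; ring

theorem stmt_1 (a b c : ℝ) (hac : 1 < a + c) (hbc : 1 < b + c) (habc : 2 < a + b + c) :
    MeasureTheory.IntegrableOn
      (fun p : ℝ × ℝ => (|p.1| + 1) ^ (-a) * (|p.2| + 1) ^ (-b) * (|p.1 + p.2| + 1) ^ (-c))
      (Set.Ioi 0 ×ˢ Set.Ioi 0) := by
  rcases le_total c 0 with hc | hc
  · exact integrableOn_of_add_add_one_rpow_neg_le hac hbc fun y v hy hv =>
      add_add_one_rpow_neg_le_of_nonpos hc hy.le hv.le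
  · obtain ⟨p, q, hp, hq, rfl, hap, hbq⟩ := exists_nonneg_split_one_lt_add hc hac hbc habc
    exact integrableOn_of_add_add_one_rpow_neg_le hap hbq fun y v hy hv =>
      add_add_one_rpow_neg_le_of_nonneg hp hq hy.le hv.le
end
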